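/- Let A ∈ ℝ^{m×n} have rank ρ with thin SVD A = UΣV^T, let B ∈ ℝ^{m×p}, and let S ∈ ℝ^{r×m} with rank(SU) = ρ. Then B - A(SA)⁺SB = (I - UU^T)B - U(SU)⁺S(I - UU^T)B. -/

import Mathlib

open Matrix BigOperators

noncomputable def frob {m n : ℕ} (A : Matrix (Fin m) (Fin n) ℝ) : ℝ :=
  Real.sqrt (∑ i, ∑ j, (A i j)^2)

noncomputable def spec {m n : ℕ} (A : Matrix (Fin m) (Fin n) ℝ) : ℝ :=
  ‖LinearMap.toContinuousLinearMap (Matrix.toEuclideanLin A)‖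

def IsMoorePenrose {m n : ℕ} (A : Matrix (Fin m) (Fin n) ℝ) (Ap : Matrix (Fin n) (Fin m) ℝ) : Prop :=
  A * Ap * A = A ∧ Ap * A * Ap = Ap ∧ (A * Ap)ᵀ = A * Ap ∧ (Ap * A)ᵀ = Ap * A

/-- A square idempotent matrix of full rank is the identity. -/
lemma idem_full_rank_eq_one {ρ : ℕ} (M : Matrix (Fin ρ) (Fin ρ) ℝ)
    (hidem : M * M = M) (hrank : M.rank = ρ) : M = 1 := by
  have htop : LinearMap.range M.mulVecLin = ⊤ := by
    apply Submodule.eq_top_of_finrank_eq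
    simpa [Matrix.rank] using hrank
  have hsurj : Function.Surjective M.mulVecLin := LinearMap.range_eq_top.mp htop
  have hmv : ∀ v : Fin ρ → ℝ, M *ᵥ v = v := by
    intro v
    obtain ⟨w, hw⟩ := hsurj v
    simp only [Matrix.mulVecLin_apply] at hw
    calc M *ᵥ v = M *ᵥ (M *ᵥ w) := by rw [hw]
    _ = (M * M) *ᵥ w := Matrix.mulVec_mulVec _ _ _
    _ = M *ᵥ w := by rw [hidem]
    _ = v := hw
  ext i j
  have h := congrFun (hmv (Pi.single j 1)) i
  simp only [Matrix.mulVec_single_one, Matrix.col_apply] at h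
  rw [h]
  simp [Matrix.one_apply, Pi.single_apply, eq_comm]

/-- Uniqueness of the Moore–Penrose pseudoinverse. -/
lemma mp_unique {m n : ℕ} (A : Matrix (Fin m) (Fin n) ℝ)
    (P Q : Matrix (Fin n) (Fin m) ℝ)
    (hP : IsMoorePenrose A P) (hQ : IsMoorePenrose A Q) : P = Q := by
  obtain ⟨hP1, hP2, hP3, hP4⟩ := hP
  obtain ⟨hQ1, hQ2, hQ3, hQ4⟩ := hQ
  have hAt1 : Aᵀ = Aᵀ * (A * Q) := by
    calc Aᵀ = (A * Q * A)ᵀ := by rw [hQ1]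
    _ = Aᵀ * (A * Q)ᵀ := Matrix.transpose_mul _ _
    _ = Aᵀ * (A * Q) := by rw [hQ3]
  have hAt2 : Aᵀ = (Q * A) * Aᵀ := by
    calc Aᵀ = (A * (Q * A))ᵀ := by rw [← Matrix.mul_assoc, hQ1]
    _ = (Q * A)ᵀ * Aᵀ := Matrix.transpose_mul _ _
    _ = (Q * A) * Aᵀ := by rw [hQ4]
  have hAP : A * P = A * Q := by
    calc A * P = (A * P)ᵀ := hP3.symm
    _ = Pᵀ * Aᵀ := Matrix.transpose_mul _ _
    _ = Pᵀ * (Aᵀ * (A * Q)) := by rw [← hAt1]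
    _ = (Pᵀ * Aᵀ) * (A * Q) := by rw [Matrix.mul_assoc]
    _ = (A * P)ᵀ * (A * Q) := by rw [Matrix.transpose_mul]
    _ = (A * P) * (A * Q) := by rw [hP3]
    _ = (A * P * A) * Q := by simp only [Matrix.mul_assoc]
    _ = A * Q := by rw [hP1]
  have hPA : P * A = Q * A := by
    calc P * A = (P * A)ᵀ := hP4.symm
    _ = Aᵀ * Pᵀ := Matrix.transpose_mul _ _
    _ = ((Q * A) * Aᵀ) * Pᵀ := by rw [← hAt2]
    _ = (Q * A) * (Aᵀ * Pᵀ) := by rw [Matrix.mul_assoc]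
    _ = (Q * A) * (P * A)ᵀ := by rw [← Matrix.transpose_mul]
    _ = (Q * A) * (P * A) := by rw [hP4]
    _ = Q * (A * P * A) := by rw [Matrix.mul_assoc, Matrix.mul_assoc]
    _ = Q * A := by rw [hP1]
  calc P = P * A * P := hP2.symm
  _ = Q * A * P := by rw [hPA]
  _ = Q * (A * P) := by rw [Matrix.mul_assoc]
  _ = Q * (A * Q) := by rw [hAP]
  _ = Q * A * Q := by rw [← Matrix.mul_assoc]
  _ = Q := hQ2

/-- Structural identity: `B - A(SA)⁺SB = (I - UUᵀ)B - U(SU)⁺S(I - UUᵀ)B`. -/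
theorem regression_residual_identity {m n p r ρ : ℕ}
    (A : Matrix (Fin m) (Fin n) ℝ) (B : Matrix (Fin m) (Fin p) ℝ)
    (U : Matrix (Fin m) (Fin ρ) ℝ) (V : Matrix (Fin n) (Fin ρ) ℝ) (σ : Fin ρ → ℝ)
    (S : Matrix (Fin r) (Fin m) ℝ)
    (hU : Uᵀ * U = 1) (hV : Vᵀ * V = 1) (hσ : ∀ i, 0 < σ i)
    (hA : A = U * Matrix.diagonal σ * Vᵀ) (hrA : A.rank = ρ)
    (hrank : (S * U).rank = ρ)
    (SAp : Matrix (Fin n) (Fin r) ℝ) (SUp : Matrix (Fin ρ) (Fin r) ℝ)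
    (hSAp : IsMoorePenrose (S * A) SAp) (hSUp : IsMoorePenrose (S * U) SUp) :
    B - A * (SAp * (S * B)) =
      (1 - U * Uᵀ) * B - U * (SUp * (S * ((1 - U * Uᵀ) * B))) := by
  obtain ⟨h1, h2, h3, h4⟩ := hSUp
  set D : Matrix (Fin ρ) (Fin ρ) ℝ := Matrix.diagonal σ with hD
  set E : Matrix (Fin ρ) (Fin ρ) ℝ := Matrix.diagonal (fun i => (σ i)⁻¹) with hE
  have hDE : D * E = 1 := by
    have h : (fun i => σ i * (σ i)⁻¹) = fun _ => (1 : ℝ) :=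
      funext fun i => mul_inv_cancel₀ (hσ i).ne'
    rw [hD, hE, Matrix.diagonal_mul_diagonal, h, Matrix.diagonal_one]
  have hED : E * D = 1 := by
    have h : (fun i => (σ i)⁻¹ * σ i) = fun _ => (1 : ℝ) :=
      funext fun i => inv_mul_cancel₀ (hσ i).ne'
    rw [hD, hE, Matrix.diagonal_mul_diagonal, h, Matrix.diagonal_one]
  -- SUp * (S * U) = 1
  have hSUpSU : SUp * (S * U) = 1 := by
    apply idem_full_rank_eq_one
    · calc SUp * (S * U) * (SUp * (S * U))
          = SUp * (S * U * SUp * (S * U)) := by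
            simp only [Matrix.mul_assoc]
      _ = SUp * (S * U) := by rw [h1]
    · refine le_antisymm ?_ ?_
      · simpa using (Matrix.rank_le_card_width (SUp * (S * U))).trans_eq (by simp)
      · calc ρ = (S * U).rank := hrank.symm
        _ = (S * U * SUp * (S * U)).rank := by rw [h1]
        _ = (S * U * (SUp * (S * U))).rank := by rw [Matrix.mul_assoc]
        _ ≤ (SUp * (S * U)).rank := Matrix.rank_mul_le_right _ _
  -- The candidate pseudoinverse of S*A
  have hSA : S * A = S * U * D * Vᵀ := by
    rw [hA]; simp only [Matrix.mul_assoc]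
  have hVtV : Vᵀ * V = 1 := hV
  have hcand : IsMoorePenrose (S * A) (V * E * SUp) := by
    have key : (S * A) * (V * E * SUp) = S * U * SUp := by
      rw [hSA]
      calc S * U * D * Vᵀ * (V * E * SUp)
          = S * U * D * (Vᵀ * V) * E * SUp := by simp only [Matrix.mul_assoc]
      _ = S * U * (D * E) * SUp := by rw [hVtV]; simp only [Matrix.mul_one, Matrix.mul_assoc]
      _ = S * U * SUp := by rw [hDE, Matrix.mul_one]
    have key2 : (V * E * SUp) * (S * A) = V * Vᵀ := by
      rw [hSA]
      calc V * E * SUp * (S * U * D * Vᵀ)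
          = V * E * (SUp * (S * U)) * D * Vᵀ := by simp only [Matrix.mul_assoc]
      _ = V * (E * D) * Vᵀ := by rw [hSUpSU]; simp only [Matrix.mul_one, Matrix.mul_assoc]
      _ = V * Vᵀ := by rw [hED, Matrix.mul_one]
    refine ⟨?_, ?_, ?_, ?_⟩
    · rw [key, hSA]
      calc S * U * SUp * (S * U * D * Vᵀ)
          = S * U * (SUp * (S * U)) * D * Vᵀ := by simp only [Matrix.mul_assoc]
      _ = S * U * D * Vᵀ := by rw [hSUpSU, Matrix.mul_one]
    · rw [key2]
      calc V * Vᵀ * (V * E * SUp)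
          = V * (Vᵀ * V) * E * SUp := by simp only [Matrix.mul_assoc]
      _ = V * E * SUp := by rw [hVtV]; simp only [Matrix.mul_one, Matrix.mul_assoc]
    · rw [key]; exact h3
    · rw [key2, Matrix.transpose_mul, Matrix.transpose_transpose]
  have hSApEq : SAp = V * E * SUp := mp_unique _ _ _ hSAp hcand
  have hASAp : A * SAp = U * SUp := by
    rw [hSApEq, hA]
    calc U * D * Vᵀ * (V * E * SUp)
        = U * D * (Vᵀ * V) * E * SUp := by simp only [Matrix.mul_assoc]
    _ = U * (D * E) * SUp := by rw [hVtV]; simp only [Matrix.mul_one, Matrix.mul_assoc]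
    _ = U * SUp := by rw [hDE, Matrix.mul_one]
  have hcancel : U * (SUp * (S * (U * (Uᵀ * B)))) = U * (Uᵀ * B) := by
    calc U * (SUp * (S * (U * (Uᵀ * B))))
        = U * (SUp * (S * U)) * (Uᵀ * B) := by simp only [Matrix.mul_assoc]
    _ = U * (Uᵀ * B) := by rw [hSUpSU, Matrix.mul_one]
  rw [show A * (SAp * (S * B)) = U * (SUp * (S * B)) from by
    rw [← Matrix.mul_assoc, hASAp, Matrix.mul_assoc]]
  simp only [Matrix.sub_mul, Matrix.mul_sub, Matrix.one_mul, Matrix.mul_assoc]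
  rw [hcancel]
  abel
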